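/- arXiv:1208.2847 — 8 statements merged into one kernel-verified Lean document; each statement's English description precedes it below -/
import Mathlib

section
/- There exists a constant C > 0 such that for every integer n ≥ 2, F(n,n) ≥ n^(n/2 − C·n/log n) (real exponentiation, logarithm base 2). -/
/-!
Colour the cells of the `n × n` grid by a map `φ` into `c = ⌊√n⌋ + 1` colours, and call a
permutation `w` admissible if every cell `(i, w i)` has colour `a`, while for `i ≠ j` the cells
`(i, w j)` and `(j, w i)` never both do. A reverse of two admissible permutations `w, x` at
positions `i, j` would give `(i, w j) = (i, x i)` and `(j, w i) = (j, x j)`, both of colour `a`;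
so the admissible permutations are reverse-free. A fixed permutation is admissible for at least
a fraction `c⁻ⁿ (1 - c⁻²)^(n choose 2)` of all colourings, so some colouring admits at least
`n! c⁻ⁿ (1 - c⁻²)^(n choose 2) ≥ n^(n/2) / (2e²)ⁿ` permutations.
-/

/-- Two words have a reverse if they agree crosswise on a pair of positions
with distinct letters. -/
def HasReverse {k n : ℕ} (w x : Fin k → Fin n) : Prop :=
  ∃ i j : Fin k, w i ≠ w j ∧ w i = x j ∧ w j = x i

/-- A set of words is reverse-free if no two distinct words in it have a reverse. -/
def ReverseFree {k n : ℕ} (S : Set (Fin k → Fin n)) : Prop :=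
  ∀ w ∈ S, ∀ x ∈ S, w ≠ x → ¬ HasReverse w x

/-- `F n k`: maximum size of a reverse-free set of repetition-free words
of length `k` over the alphabet `[n]`. -/
noncomputable def F (n k : ℕ) : ℕ :=
  sSup {m | ∃ S : Finset (Fin k → Fin n),
    (∀ w ∈ S, Function.Injective w) ∧ ReverseFree (S : Set (Fin k → Fin n)) ∧ S.card = m}

/-- `Fbar n k`: maximum size of a reverse-free set of arbitrary words
of length `k` over the alphabet `[n]`. -/
noncomputable def Fbar (n k : ℕ) : ℕ :=
  sSup {m | ∃ S : Finset (Fin k → Fin n), ReverseFree (S : Set (Fin k → Fin n)) ∧ S.card = m}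

open Finset Function

section Admissible

variable {ι β α : Type*}

def Admissible (φ : ι → β → α) (a : α) (w : ι → β) : Prop :=
  (∀ i, φ i (w i) = a) ∧ ∀ i j, φ i (w j) = a → φ j (w i) = a → i = j

theorem reverseFree_setOf_admissible {k n : ℕ} (φ : Fin k → Fin n → α) (a : α) :
    ReverseFree {w | Admissible φ a w} := by
  rintro w hw x hx - ⟨i, j, hne, hij, hji⟩
  refine hne (congrArg w (hw.2 i j ?_ ?_))
  · rw [hji]; exact hx.1 i
  · rw [hij]; exact hx.1 j

theorem card_le_F {n k : ℕ} (S : Finset (Fin k → Fin n)) (hinj : ∀ w ∈ S, Injective w)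
    (hS : ReverseFree (S : Set (Fin k → Fin n))) : #S ≤ F n k :=
  le_csSup ⟨Fintype.card (Fin k → Fin n), fun _ ⟨T, _, _, hT⟩ => hT ▸ card_le_univ T⟩
    ⟨S, hinj, hS, rfl⟩

variable [LinearOrder ι] (a : α)

def pairExtend (f : {p : ι × ι // p.1 < p.2} → {q : α × α // q ≠ (a, a)}) (i j : ι) :
    α :=
  if h : i < j then (f ⟨(i, j), h⟩).1.1
  else if h : j < i then (f ⟨(j, i), h⟩).1.2 else a

variable {a} (f : {p : ι × ι // p.1 < p.2} → {q : α × α // q ≠ (a, a)})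

theorem pairExtend_self (i : ι) : pairExtend a f i i = a := by
  simp [pairExtend]

theorem pairExtend_of_lt {i j : ι} (h : i < j) :
    (pairExtend a f i j, pairExtend a f j i) = (f ⟨(i, j), h⟩).1 := by
  simp [pairExtend, h, h.not_gt]

theorem admissible_pairExtend : Admissible (pairExtend a f) a id := by
  refine ⟨pairExtend_self f, fun i j hij hji => ?_⟩
  simp only [id] at hij hji
  rcases lt_trichotomy i j with h | h | h
  · exact absurd (by rw [← pairExtend_of_lt f h]; simp [hij, hji]) (f ⟨(i, j), h⟩).2
  · exact h
  · exact absurd (by rw [← pairExtend_of_lt f h]; simp [hij, hji]) (f ⟨(j, i), h⟩).2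

theorem pairExtend_injective : Injective (pairExtend (ι := ι) a) := by
  intro f g hfg
  funext ⟨⟨i, j⟩, h⟩
  apply Subtype.ext
  rw [← pairExtend_of_lt f h, ← pairExtend_of_lt g h, hfg]

variable [Fintype ι] [Fintype α]

/- Since `σ` is a bijection, the cells `(i, σ j)` and `(j, σ i)`, `i < j`, are pairwise distinct
and off the diagonal `(i, σ i)`: each such pair of cells takes any colour pair but `(a, a)`. -/
open Classical in
theorem pow_le_card_admissible (σ : Equiv.Perm ι) :
    (Fintype.card α ^ 2 - 1) ^ (Fintype.card ι).choose 2 ≤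
      #{φ : ι → ι → α | Admissible φ a σ} := by
  have hpairs : Fintype.card {p : ι × ι // p.1 < p.2} = (Fintype.card ι).choose 2 := by
    rw [Fintype.card_subtype, Fintype.card_product_filter_lt]
  have hcolours : Fintype.card {q : α × α // q ≠ (a, a)} = Fintype.card α ^ 2 - 1 := by
    rw [Fintype.card_subtype_compl, Fintype.card_prod, Fintype.card_subtype_eq, sq]
  rw [← hpairs, ← hcolours, ← Fintype.card_fun, ← Fintype.card_subtype]
  refine Fintype.card_le_of_injective
    (fun f => ⟨fun i v => pairExtend a f i (σ.symm v), ?_⟩) fun f g hfg => ?_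
  · simpa [Admissible] using admissible_pairExtend f
  · refine pairExtend_injective (funext₂ fun i j => ?_)
    simpa using congrFun₂ (congrArg Subtype.val hfg) i (σ j)

open Classical in
theorem exists_le_card_admissible (a : α) : ∃ φ : ι → ι → α,
    (Fintype.card ι).factorial * (Fintype.card α ^ 2 - 1) ^ (Fintype.card ι).choose 2 ≤
      #{σ : Equiv.Perm ι | Admissible φ a σ} *
        Fintype.card α ^ (Fintype.card ι * Fintype.card ι) := by
  set M := (Fintype.card α ^ 2 - 1) ^ (Fintype.card ι).choose 2
  have hdouble : ∑ φ : ι → ι → α, #{σ : Equiv.Perm ι | Admissible φ a σ} =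
      ∑ σ : Equiv.Perm ι, #{φ : ι → ι → α | Admissible φ a σ} :=
    sum_card_bipartiteAbove_eq_sum_card_bipartiteBelow _
  have hlower : (Fintype.card ι).factorial * M ≤
      ∑ φ : ι → ι → α, #{σ : Equiv.Perm ι | Admissible φ a σ} := by
    rw [hdouble, ← Fintype.card_perm, ← Finset.card_univ, ← smul_eq_mul]
    exact card_nsmul_le_sum _ _ _ fun σ _ => pow_le_card_admissible σ
  obtain ⟨φ, -, hφ⟩ := exists_le_of_sum_le (s := univ) ⟨fun _ _ => a, mem_univ _⟩
    (f := fun _ => (Fintype.card ι).factorial * M)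
    (g := fun φ => #{σ : Equiv.Perm ι | Admissible φ a σ} *
      Fintype.card α ^ (Fintype.card ι * Fintype.card ι)) (by
    simp only [sum_const, card_univ, Fintype.card_fun, smul_eq_mul, ← sum_mul, ← pow_mul]
    rw [mul_comm]
    exact Nat.mul_le_mul_right _ hlower)
  exact ⟨φ, hφ⟩

end Admissible

theorem factorial_mul_le_F_mul (n : ℕ) (α : Type*) [Fintype α] [Nonempty α] :
    n.factorial * (Fintype.card α ^ 2 - 1) ^ n.choose 2 ≤ F n n * Fintype.card α ^ (n * n) := by
  classical
  obtain ⟨a⟩ := ‹Nonempty α›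
  obtain ⟨φ, hφ⟩ := exists_le_card_admissible (ι := Fin n) a
  simp only [Fintype.card_fin] at hφ
  let S : Finset (Fin n → Fin n) := Finset.map ⟨(⇑), Equiv.coe_fn_injective⟩
    {σ : Equiv.Perm (Fin n) | Admissible φ a σ}
  have hS : #S ≤ F n n := by
    refine card_le_F S ?_ ?_
    · simp only [S, mem_map, Embedding.coeFn_mk]
      rintro _ ⟨σ, -, rfl⟩
      exact σ.injective
    · intro w hw x hx
      simp only [S, coe_map, Set.mem_image, coe_filter, mem_univ, true_and,
        Embedding.coeFn_mk] at hw hx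
      obtain ⟨σ, hσ, rfl⟩ := hw
      obtain ⟨τ, hτ, rfl⟩ := hx
      exact reverseFree_setOf_admissible φ _ _ hσ _ hτ
  rw [card_map] at hS
  exact hφ.trans (Nat.mul_le_mul_right _ hS)

open Real

theorem pow_le_exp_mul_factorial (n : ℕ) : (n : ℝ) ^ n ≤ exp n * n.factorial := by
  have := pow_div_factorial_le_exp (n : ℝ) (Nat.cast_nonneg n) n
  rwa [div_le_iff₀ (by positivity)] at this

theorem pow_le_exp_mul_sub_one_pow {m : ℝ} (hm : 2 ≤ m) (K : ℕ) :
    m ^ K ≤ exp (2 * K / m) * (m - 1) ^ K := by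
  have hbase : m ≤ exp (2 / m) * (m - 1) := by
    have h2m : 1 + 2 / m ≤ exp (2 / m) := by linarith [add_one_le_exp (2 / m)]
    have : m ≤ (1 + 2 / m) * (m - 1) := by
      have hm0 : 0 < m := by linarith
      have h1 : 2 / m ≤ 1 := (div_le_one hm0).2 hm
      have h2 : 2 / m * m = 2 := div_mul_cancel₀ 2 hm0.ne'
      nlinarith
    exact this.trans (mul_le_mul_of_nonneg_right h2m (by linarith))
  calc m ^ K ≤ (exp (2 / m) * (m - 1)) ^ K := pow_le_pow_left₀ (by linarith) hbase K
    _ = exp (2 * K / m) * (m - 1) ^ K := by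
      rw [mul_pow, ← exp_nat_mul]; ring_nf

theorem add_two_mul_choose_two (n : ℕ) : n + 2 * n.choose 2 = n * n := by
  induction n with
  | zero => rfl
  | succ n ih => rw [Nat.choose_succ_succ, Nat.choose_one_right]; linarith

theorem pow_le_exp_mul_pow_mul_F {n c : ℕ} (hc : 2 ≤ c) (hn : n ≤ c ^ 2) :
    (n : ℝ) ^ n ≤ exp (2 * n) * c ^ n * F n n := by
  have hnm : (n : ℝ) ≤ (c : ℝ) ^ 2 := by exact_mod_cast hn
  have hm2 : 2 ≤ (c : ℝ) ^ 2 := by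
    have : (2 : ℝ) ≤ c := by exact_mod_cast hc
    nlinarith
  set m : ℝ := (c : ℝ) ^ 2
  set K := n.choose 2
  have hnK := add_two_mul_choose_two n
  have hcount : (n.factorial : ℝ) * (m - 1) ^ K ≤ F n n * c ^ n * m ^ K := by
    have : Nonempty (Fin c) := ⟨⟨0, by omega⟩⟩
    have h := factorial_mul_le_F_mul n (Fin c)
    rw [Fintype.card_fin, ← hnK, pow_add, pow_mul] at h
    have h' : ((n.factorial * (c ^ 2 - 1) ^ K : ℕ) : ℝ) ≤
        ((F n n * (c ^ n * (c ^ 2) ^ K) : ℕ) : ℝ) := by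
      exact_mod_cast h
    push_cast [Nat.cast_sub (Nat.one_le_pow _ _ (by omega) : 1 ≤ c ^ 2)] at h'
    linarith
  have hexp : exp (2 * K / m) ≤ exp n := by
    gcongr
    rw [div_le_iff₀ (by positivity)]
    have : (2 * K : ℝ) ≤ n * n := by exact_mod_cast (by omega : 2 * K ≤ n * n)
    nlinarith
  have hm1 : 0 ≤ (m - 1) ^ K := pow_nonneg (by linarith) K
  have key : (n : ℝ) ^ n * m ^ K ≤ exp (2 * n) * c ^ n * F n n * m ^ K :=
    calc (n : ℝ) ^ n * m ^ K
        ≤ exp n * n.factorial * (exp (2 * K / m) * (m - 1) ^ K) := by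
          gcongr
          · exact pow_le_exp_mul_factorial n
          · exact pow_le_exp_mul_sub_one_pow hm2 K
      _ ≤ exp n * exp n * (n.factorial * (m - 1) ^ K) := by
          rw [mul_mul_mul_comm]
          exact mul_le_mul_of_nonneg_right (by gcongr) (by positivity)
      _ ≤ exp n * exp n * (F n n * c ^ n * m ^ K) := by gcongr
      _ = exp (2 * n) * c ^ n * F n n * m ^ K := by
          rw [← exp_add, two_mul]; ring
  exact le_of_mul_le_mul_right key (by positivity)

theorem exp_two_le_eight : exp 2 ≤ 8 := by
  have h := exp_one_lt_d9
  have : exp 2 = exp 1 ^ 2 := by rw [← exp_nat_mul]; norm_num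
  rw [this]
  nlinarith [exp_pos 1]

theorem sqrt_pow_le_F {n : ℕ} (hn : 0 < n) : √(n : ℝ) ^ n ≤ 16 ^ n * F n n := by
  set c := Nat.sqrt n + 1
  have hs : 1 ≤ Nat.sqrt n := Nat.sqrt_pos.2 hn
  have hc : (c : ℝ) ≤ 2 * √n := by
    have : (c : ℝ) ≤ 2 * Nat.sqrt n := by exact_mod_cast (by omega : c ≤ 2 * Nat.sqrt n)
    linarith [nat_sqrt_le_real_sqrt (a := n)]
  have hbound := pow_le_exp_mul_pow_mul_F (by omega : 2 ≤ c) (Nat.lt_succ_sqrt' n).le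
  have hsqrt : 0 < √(n : ℝ) := sqrt_pos.2 (by exact_mod_cast hn)
  have key : √(n : ℝ) ^ n * √(n : ℝ) ^ n ≤ 16 ^ n * F n n * √(n : ℝ) ^ n :=
    calc √(n : ℝ) ^ n * √(n : ℝ) ^ n = (n : ℝ) ^ n := by
          rw [← mul_pow, mul_self_sqrt (Nat.cast_nonneg n)]
      _ ≤ exp (2 * n) * c ^ n * F n n := hbound
      _ ≤ exp 2 ^ n * (2 * √n) ^ n * F n n := by
          rw [mul_comm 2, exp_nat_mul]
          gcongr
      _ = (2 * exp 2) ^ n * F n n * √(n : ℝ) ^ n := by ring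
      _ ≤ 16 ^ n * F n n * √(n : ℝ) ^ n := by
          gcongr
          linarith [exp_two_le_eight]
  exact le_of_mul_le_mul_right key (by positivity)

theorem rpow_div_logb {b x : ℝ} (hb : 0 < b) (hb1 : b ≠ 1) (hx : 0 < x) (hx1 : x ≠ 1)
    (y : ℝ) : x ^ (y / logb b x) = b ^ y := by
  have hlog : logb b x ≠ 0 := by
    simp [logb_eq_zero, hb.ne', hb1, hx.ne', hx1, (by linarith : b ≠ -1),
      (by linarith : x ≠ -1)]
  calc x ^ (y / logb b x) = (b ^ logb b x) ^ (y / logb b x) := by rw [rpow_logb hb hb1 hx]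
    _ = b ^ y := by rw [← rpow_mul hb.le, mul_div_cancel₀ _ hlog]

theorem stmt4 : ∃ C : ℝ, C > 0 ∧ ∀ n : ℕ, 2 ≤ n →
    (n : ℝ) ^ ((n : ℝ) / 2 - C * n / Real.logb 2 n) ≤ (F n n : ℝ) := by
  refine ⟨4, by norm_num, fun n hn => ?_⟩
  have hn1 : (1 : ℝ) < n := by exact_mod_cast hn
  have h16 : (2 : ℝ) ^ (4 * n : ℝ) = 16 ^ n := by
    rw [rpow_mul (by norm_num), rpow_natCast]
    norm_num
  rw [rpow_sub (by linarith), rpow_div_two_eq_sqrt _ (by linarith), rpow_natCast,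
    rpow_div_logb (by norm_num) (by norm_num) (by linarith) hn1.ne', h16,
    div_le_iff₀ (by positivity), mul_comm]
  exact sqrt_pow_le_F (by omega)
end

section
/- For all integers n ≥ k ≥ 1, F(n,k) ≥ ⌊n/k⌋^k · F(k,k). -/
theorem stmt5 : ∀ n k : ℕ, 1 ≤ k → k ≤ n → (n / k) ^ k * F k k ≤ F n k := by
  intro n k hk hkn
  set q := n / k with hq
  have hq1 : 1 ≤ q := (Nat.one_le_div_iff (by omega)).2 hkn
  have hqk : q * k ≤ n := by
    simpa [hq, mul_comm] using Nat.div_mul_le_self n k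
  have hbound : ∀ (a : Fin k) (b : Fin q), q * (a : ℕ) + (b : ℕ) < n := by
    intro a b
    have hb := b.isLt
    have ha := a.isLt
    have : q * ((a : ℕ) + 1) ≤ q * k := Nat.mul_le_mul_left _ (by omega)
    nlinarith
  -- obtain an optimal set for F k k
  have hmem : (F k k) ∈ {m | ∃ S : Finset (Fin k → Fin k),
      (∀ w ∈ S, Function.Injective w) ∧ ReverseFree (S : Set (Fin k → Fin k)) ∧ S.card = m} := by
    apply Nat.sSup_mem
    · exact ⟨0, ∅, by simp [ReverseFree]⟩
    · exact ⟨Fintype.card (Fin k → Fin k), fun m hm => by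
        obtain ⟨S, _, _, hc⟩ := hm
        exact hc ▸ Finset.card_le_univ S⟩
  obtain ⟨S, hinj, hrev, hcard⟩ := hmem
  -- the embedding
  let emb : (Fin k → Fin q) × (Fin k → Fin k) → (Fin k → Fin n) :=
    fun p i => ⟨q * (p.2 i : ℕ) + (p.1 (p.2 i) : ℕ), hbound _ _⟩
  have hdiv : ∀ (p : (Fin k → Fin q) × (Fin k → Fin k)) (i : Fin k),
      ((emb p i : ℕ)) / q = (p.2 i : ℕ) := by
    intro p i
    show (q * (p.2 i : ℕ) + (p.1 (p.2 i) : ℕ)) / q = (p.2 i : ℕ)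
    rw [Nat.mul_add_div (by omega), Nat.div_eq_of_lt (p.1 (p.2 i)).isLt, add_zero]
  have hmod : ∀ (p : (Fin k → Fin q) × (Fin k → Fin k)) (i : Fin k),
      ((emb p i : ℕ)) % q = (p.1 (p.2 i) : ℕ) := by
    intro p i
    show (q * (p.2 i : ℕ) + (p.1 (p.2 i) : ℕ)) % q = (p.1 (p.2 i) : ℕ)
    rw [Nat.mul_add_mod, Nat.mod_eq_of_lt (p.1 (p.2 i)).isLt]
  -- from equality of letters, recover block equality
  have hblock : ∀ p p' (i i' : Fin k), emb p i = emb p' i' → p.2 i = p'.2 i' := by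
    intro p p' i i' h
    have := congrArg (fun x : Fin n => (x : ℕ) / q) h
    simp only [hdiv] at this
    exact Fin.ext this
  let T : Finset (Fin k → Fin n) :=
    Finset.image emb ((Finset.univ : Finset (Fin k → Fin q)) ×ˢ S)
  have hinjOn : Set.InjOn emb ↑((Finset.univ : Finset (Fin k → Fin q)) ×ˢ S) := by
    intro p hp p' hp' h
    have hw : p.2 = p'.2 := by
      funext i
      exact hblock p p' i i (congrFun h i)
    have hws : p.2 ∈ S := by
      exact (Finset.mem_product.1 (Finset.mem_coe.1 hp)).2
    have hsurj : Function.Surjective p.2 :=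
      Finite.surjective_of_injective (hinj _ hws)
    have hf : p.1 = p'.1 := by
      funext a
      obtain ⟨i, rfl⟩ := hsurj a
      have := congrArg (fun x : Fin n => (x : ℕ) % q) (congrFun h i)
      simp only [hmod] at this
      rw [← hw] at this
      exact Fin.ext this
    exact Prod.ext hf hw
  have hTcard : T.card = q ^ k * F k k := by
    rw [Finset.card_image_of_injOn hinjOn, Finset.card_product, Finset.card_univ,
      Fintype.card_fun, Fintype.card_fin, Fintype.card_fin, hcard]
  -- T witnesses a member of the F n k set
  have hTmem : q ^ k * F k k ∈ {m | ∃ S : Finset (Fin k → Fin n),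
      (∀ w ∈ S, Function.Injective w) ∧ ReverseFree (S : Set (Fin k → Fin n)) ∧ S.card = m} := by
    refine ⟨T, ?_, ?_, hTcard⟩
    · intro x hx
      obtain ⟨p, hp, rfl⟩ := Finset.mem_image.1 hx
      have hws : p.2 ∈ S := (Finset.mem_product.1 hp).2
      intro i j hij
      exact hinj _ hws (hblock p p i j hij)
    · intro x hx y hy hne ⟨i, j, h1, h2, h3⟩
      simp only [T, Finset.coe_image, Set.mem_image, Finset.mem_coe] at hx hy
      obtain ⟨p, hp, rfl⟩ := hx
      obtain ⟨p', hp', rfl⟩ := hy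
      have hws : p.2 ∈ S := (Finset.mem_product.1 hp).2
      have hws' : p'.2 ∈ S := (Finset.mem_product.1 hp').2
      have hb2 : p.2 i = p'.2 j := hblock p p' i j h2
      have hb3 : p.2 j = p'.2 i := hblock p p' j i h3
      have hb1 : p.2 i ≠ p.2 j := by
        intro h
        apply h1
        have hm2 := hmod p i
        have hm3 := hmod p j
        apply Fin.ext
        show q * (p.2 i : ℕ) + (p.1 (p.2 i) : ℕ) = q * (p.2 j : ℕ) + (p.1 (p.2 j) : ℕ)
        rw [h]
      by_cases hww : p.2 = p'.2
      · exact hb1 (hb2.trans (congrFun hww j).symm)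
      · exact hrev _ hws _ hws' hww ⟨i, j, hb1, hb2, hb3⟩
  -- conclude
  have hbdd : BddAbove {m | ∃ S : Finset (Fin k → Fin n),
      (∀ w ∈ S, Function.Injective w) ∧ ReverseFree (S : Set (Fin k → Fin n)) ∧ S.card = m} :=
    ⟨Fintype.card (Fin k → Fin n), fun m hm => by
      obtain ⟨S, _, _, hc⟩ := hm
      exact hc ▸ Finset.card_le_univ S⟩
  exact le_csSup hbdd hTmem
end

section
/- Let k and n be integers with n ≥ k ≥ 1, and let m be a real number with 1 ≤ m ≤ √k. Let A be a k × n 0-1 matrix with at least m·n·√k 1-entries. Then the number of occurrences of S in A is at least n²·(m² − 1)²/4 − m³·n·√k. -/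
/-- The number of 1-entries of a `k × n` 0-1 matrix (represented as a
Boolean-valued matrix). -/
def entriesCount {k n : ℕ} (A : Fin k → Fin n → Bool) : ℕ :=
  (Finset.univ.filter (fun p : Fin k × Fin n => A p.1 p.2 = true)).card

/-- The number of occurrences of the all-ones `2 × 2` matrix `S` in `A`:
the number of pairs of distinct rows together with pairs of distinct columns
such that all four intersection entries are 1. -/
def occS {k n : ℕ} (A : Fin k → Fin n → Bool) : ℕ :=
  (Finset.univ.filter (fun q : (Fin k × Fin k) × Fin n × Fin n =>
    q.1.1 < q.1.2 ∧ q.2.1 < q.2.2 ∧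
    A q.1.1 q.2.1 = true ∧ A q.1.1 q.2.2 = true ∧
    A q.1.2 q.2.1 = true ∧ A q.1.2 q.2.2 = true)).card

/-!
Let `d r` be the number of 1-entries in row `r` and `t c c'` the number of rows having 1-entries
in both columns `c < c'`. Counting pairs of 1-entries lying in a common row gives
`∑ t = ∑ (d r).choose 2`, and counting occurrences of `S` column pair by column pair gives
`occS A = ∑ (t c c').choose 2`. Jensen's inequality for `x ↦ x.choose 2` (i.e. Cauchy–Schwarz),
applied first over the `k` rows and then over the at most `n ^ 2 / 2` column pairs, bounds `∑ t`
and then `occS A` from below. Each bound is a quadratic `x ^ 2 - c * x`, increasing for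
`x ≥ c / 2`, into which a lower bound for `x` beyond `c / 2` may be substituted. For the second
quadratic this needs `n > 4`; for `n ≤ 4` the claimed bound is not positive.
-/

open Finset

section Counting

variable {α β : Type*} [Fintype α] [Fintype β] (A : α → β → Bool)

def rowSupport (r : α) : Finset β := {c | A r c}

def commonRows (p : β × β) : Finset α := {r | A r p.1 ∧ A r p.2}

theorem sum_card_commonRows_eq_sum_choose [LinearOrder β] :
    ∑ p : β × β with p.1 < p.2, #(commonRows A p) = ∑ r, (#(rowSupport A r)).choose 2 := by
  have hdouble := sum_card_bipartiteAbove_eq_sum_card_bipartiteBelow (s := univ)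
    (t := {p : β × β | p.1 < p.2}) (r := fun r p => A r p.1 ∧ A r p.2)
  refine hdouble.symm.trans (sum_congr rfl fun r _ => ?_)
  rw [← card_product_filter_lt]
  congr 1
  ext p
  simp only [bipartiteAbove, rowSupport, mem_filter, mem_univ, true_and, mem_product]
  tauto

theorem card_filter_fst_lt_snd_le [LinearOrder β] :
    (#{p : β × β | p.1 < p.2} : ℝ) ≤ Fintype.card β ^ 2 / 2 := by
  rw [← univ_product_univ, card_product_filter_lt, Nat.cast_choose_two, card_univ]
  nlinarith [Nat.cast_nonneg (α := ℝ) (Fintype.card β)]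

end Counting

theorem entriesCount_eq_sum_card_rowSupport {k n : ℕ} (A : Fin k → Fin n → Bool) :
    entriesCount A = ∑ r, #(rowSupport A r) := by
  simp only [entriesCount, rowSupport, card_filter, Fintype.sum_prod_type]

theorem occS_eq_sum_choose_card_commonRows {k n : ℕ} (A : Fin k → Fin n → Bool) :
    occS A = ∑ p : Fin n × Fin n with p.1 < p.2, (#(commonRows A p)).choose 2 := by
  simp_rw [← card_product_filter_lt, occS]
  rw [card_eq_sum_card_fiberwise (f := Prod.snd) (t := {p : Fin n × Fin n | p.1 < p.2})]
  · refine sum_congr rfl fun p hp => card_nbij' Prod.fst (·, p) ?_ ?_ ?_ ?_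
    all_goals intro q hq; grind [commonRows]
  · exact fun q hq => by simp_all

theorem sq_sub_mul_le_sq_sub_mul {a x c : ℝ} (hc : c ≤ 2 * a) (hax : a ≤ x) :
    a ^ 2 - c * a ≤ x ^ 2 - c * x := by
  nlinarith [mul_nonneg (sub_nonneg.2 hax) (by linarith : 0 ≤ x + a - c)]

theorem sq_sum_sub_mul_sum_le_two_mul_sum_choose_two {ι : Type*} (s : Finset ι) (f : ι → ℕ)
    {N : ℝ} (hN : #s ≤ N) :
    ((∑ i ∈ s, f i : ℕ) : ℝ) ^ 2 - N * (∑ i ∈ s, f i : ℕ)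
      ≤ 2 * N * (∑ i ∈ s, (f i).choose 2 : ℕ) := by
  have hchoose : 2 * ((∑ i ∈ s, (f i).choose 2 : ℕ) : ℝ)
      = ∑ i ∈ s, (f i : ℝ) ^ 2 - ∑ i ∈ s, (f i : ℝ) := by
    push_cast
    rw [mul_sum, ← sum_sub_distrib]
    exact sum_congr rfl fun i _ => by rw [Nat.cast_choose_two]; ring
  calc ((∑ i ∈ s, f i : ℕ) : ℝ) ^ 2 - N * (∑ i ∈ s, f i : ℕ)
      ≤ #s * ∑ i ∈ s, (f i : ℝ) ^ 2 - N * ∑ i ∈ s, (f i : ℝ) := by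
        push_cast
        gcongr
        exact sq_sum_le_card_mul_sum_sq
    _ ≤ N * ∑ i ∈ s, (f i : ℝ) ^ 2 - N * ∑ i ∈ s, (f i : ℝ) := by gcongr
    _ = 2 * N * (∑ i ∈ s, (f i).choose 2 : ℕ) := by linear_combination (-N) * hchoose

theorem sum_commonRows_lower_bound {k n m s E T : ℝ} (hk : 1 ≤ k) (hkn : k ≤ n)
    (hs0 : 0 ≤ s) (hs : s ^ 2 = k) (hm : 1 ≤ m) (hE : m * n * s ≤ E)
    (hET : E ^ 2 - k * E ≤ 2 * k * T) :
    (m ^ 2 * n ^ 2 - m * n * s) / 2 ≤ T := by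
  have hs1 : 1 ≤ s := by nlinarith
  have hkE : k ≤ m * n * s := by
    nlinarith [mul_le_mul_of_nonneg_left hm (by nlinarith : 0 ≤ n * s)]
  have hmono := sq_sub_mul_le_sq_sub_mul (c := k) (by linarith) hE
  have hsq : (m * n * s) ^ 2 - k * (m * n * s) = k * (m ^ 2 * n ^ 2 - m * n * s) := by
    rw [← hs]; ring
  nlinarith

theorem occS_lower_bound_of_four_lt {n m s T O : ℝ} (hn : 4 < n) (hs0 : 0 ≤ s)
    (hsn : s ^ 2 ≤ n) (hm : 1 ≤ m) (hT : (m ^ 2 * n ^ 2 - m * n * s) / 2 ≤ T)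
    (hTO : T ^ 2 - n ^ 2 / 2 * T ≤ n ^ 2 * O) :
    n ^ 2 * (m ^ 2 - 1) ^ 2 / 4 - m ^ 3 * n * s ≤ O := by
  have hsn2 : s ≤ n / 2 := by nlinarith
  have hT₀ : n ^ 2 / 2 ≤ 2 * ((m ^ 2 * n ^ 2 - m * n * s) / 2) := by
    nlinarith [mul_nonneg (mul_nonneg (sub_nonneg.2 hm) (by linarith : 0 ≤ n))
      (by nlinarith : 0 ≤ n * (m + 1) - s)]
  set T₀ := (m ^ 2 * n ^ 2 - m * n * s) / 2 with hT₀_def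
  have hgap : T₀ ^ 2 - n ^ 2 / 2 * T₀ - n ^ 2 * (n ^ 2 * (m ^ 2 - 1) ^ 2 / 4 - m ^ 3 * n * s)
      = n ^ 2 * (2 * m ^ 3 * n * s + m ^ 2 * s ^ 2 + (m ^ 2 - 1) * n ^ 2 + m * n * s) / 4 := by
    rw [hT₀_def]; ring
  have hgap_nonneg :
      0 ≤ n ^ 2 * (2 * m ^ 3 * n * s + m ^ 2 * s ^ 2 + (m ^ 2 - 1) * n ^ 2 + m * n * s) := by
    have : 0 ≤ m ^ 2 - 1 := by nlinarith
    have : 0 ≤ n := by linarith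
    positivity
  refine le_of_mul_le_mul_left ?_ (by positivity : (0 : ℝ) < n ^ 2)
  calc n ^ 2 * (n ^ 2 * (m ^ 2 - 1) ^ 2 / 4 - m ^ 3 * n * s)
      ≤ T₀ ^ 2 - n ^ 2 / 2 * T₀ := by linarith
    _ ≤ T ^ 2 - n ^ 2 / 2 * T := sq_sub_mul_le_sq_sub_mul hT₀ hT
    _ ≤ n ^ 2 * O := hTO

theorem occS_lower_bound_nonpos_of_le_four {n m s : ℝ} (hn0 : 0 ≤ n) (hn : n ≤ 4) (hm : 1 ≤ m)
    (hms : m ≤ s) : n ^ 2 * (m ^ 2 - 1) ^ 2 / 4 - m ^ 3 * n * s ≤ 0 := by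
  have hm4 : (m ^ 2 - 1) ^ 2 ≤ m ^ 3 * s := by nlinarith [sq_nonneg m, sq_nonneg (m - 1)]
  have hn2 : n ^ 2 ≤ 4 * n := by nlinarith
  nlinarith [mul_le_mul hn2 hm4 (sq_nonneg _) (by positivity)]

theorem stmt7 (k n : ℕ) (hk : 1 ≤ k) (hkn : k ≤ n) (m : ℝ)
    (hm1 : 1 ≤ m) (hm2 : m ≤ Real.sqrt k)
    (A : Fin k → Fin n → Bool)
    (hA : m * n * Real.sqrt k ≤ (entriesCount A : ℝ)) :
    (n : ℝ) ^ 2 * (m ^ 2 - 1) ^ 2 / 4 - m ^ 3 * n * Real.sqrt k ≤ (occS A : ℝ) := by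
  have hs : Real.sqrt k ^ 2 = k := Real.sq_sqrt (Nat.cast_nonneg k)
  have hkn' : (k : ℝ) ≤ n := by exact_mod_cast hkn
  rcases le_or_gt (n : ℝ) 4 with hn | hn
  · exact (occS_lower_bound_nonpos_of_le_four (Nat.cast_nonneg n) hn hm1 hm2).trans
      (Nat.cast_nonneg _)
  have hrows := sq_sum_sub_mul_sum_le_two_mul_sum_choose_two univ (fun r => #(rowSupport A r))
    (N := k) (by simp)
  have hcols := sq_sum_sub_mul_sum_le_two_mul_sum_choose_two {p : Fin n × Fin n | p.1 < p.2}
    (fun p => #(commonRows A p)) (by simpa using card_filter_fst_lt_snd_le (β := Fin n))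
  rw [← entriesCount_eq_sum_card_rowSupport, ← sum_card_commonRows_eq_sum_choose] at hrows
  rw [← occS_eq_sum_choose_card_commonRows] at hcols
  have hT := sum_commonRows_lower_bound (by exact_mod_cast hk) hkn' (Real.sqrt_nonneg _) hs hm1
    hA hrows
  exact occS_lower_bound_of_four_lt hn (Real.sqrt_nonneg _) (hs.trans_le hkn') hm1 hT (by linarith)
end

section
/- Let U be a finite reverse-free set of words of length k over [n] (n ≥ 1) such that the overall matrix A_U has a light 1-entry (r,c). Then the set U' = {w ∈ U : w r ≠ c} satisfies: |U'| ≥ (1 − 1/n)·|U|, the number of 1-entries of A_{U'} is at most the number of 1-entries of A_U minus 1, and z_{U'} ≥ z_U. -/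
/-- The number of 1-entries of the overall matrix `A_U` of a finite set `U` of words:
position `(i, a)` is a 1-entry iff some word `w ∈ U` has `w i = a`. -/
def overallCard {k n : ℕ} (U : Finset (Fin k → Fin n)) : ℕ :=
  (Finset.univ.filter (fun p : Fin k × Fin n => ∃ w ∈ U, w p.1 = p.2)).card

/-- The emptiness `z_U`: the number of rows of the overall matrix `A_U`
containing at most one 1-entry. -/
def emptiness {k n : ℕ} (U : Finset (Fin k → Fin n)) : ℕ :=
  (Finset.univ.filter (fun i : Fin k =>
    (Finset.univ.filter (fun a : Fin n => ∃ w ∈ U, w i = a)).card ≤ 1)).card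

theorem stmt8 {k n : ℕ} (hn : 1 ≤ n) (U : Finset (Fin k → Fin n))
    (hrf : ReverseFree (U : Set (Fin k → Fin n))) (r : Fin k) (c : Fin n)
    (hone : ∃ w ∈ U, w r = c)
    (hlight : ((U.filter (fun w => w r = c)).card : ℝ) ≤ (U.card : ℝ) / (n : ℝ)) :
    (1 - 1 / (n : ℝ)) * (U.card : ℝ) ≤ ((U.filter (fun w => w r ≠ c)).card : ℝ) ∧
    overallCard (U.filter (fun w => w r ≠ c)) + 1 ≤ overallCard U ∧
    emptiness U ≤ emptiness (U.filter (fun w => w r ≠ c)) := by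

  classical
  refine ⟨?_, ?_, ?_⟩
  · have hsum : (U.filter (fun w => w r = c)).card + (U.filter (fun w => ¬ w r = c)).card
        = U.card := by
      exact Finset.card_filter_add_card_filter_not (p := fun w : Fin k → Fin n => w r = c)
    have h1 : ((U.filter (fun w => w r = c)).card : ℝ)
        + ((U.filter (fun w => w r ≠ c)).card : ℝ) = (U.card : ℝ) := by
      exact_mod_cast hsum
    have h2 : (1 - 1 / (n:ℝ)) * (U.card : ℝ) = (U.card : ℝ) - (U.card : ℝ) / n := by
      ring
    linarith
  · have hsub : (Finset.univ.filter
        (fun p : Fin k × Fin n => ∃ w ∈ U.filter (fun w => w r ≠ c), w p.1 = p.2)) ⊆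
        (Finset.univ.filter (fun p : Fin k × Fin n => ∃ w ∈ U, w p.1 = p.2)) := by
      intro p hp
      simp only [Finset.mem_filter, Finset.mem_univ, true_and] at hp ⊢
      obtain ⟨w, hw, hwp⟩ := hp
      exact ⟨w, hw.1, hwp⟩
    have hmem : (r, c) ∈ (Finset.univ.filter
        (fun p : Fin k × Fin n => ∃ w ∈ U, w p.1 = p.2)) := by
      simp only [Finset.mem_filter, Finset.mem_univ, true_and]
      exact hone
    have hnmem : (r, c) ∉ (Finset.univ.filter
        (fun p : Fin k × Fin n => ∃ w ∈ U.filter (fun w => w r ≠ c), w p.1 = p.2)) := by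
      simp only [Finset.mem_filter, Finset.mem_univ, true_and]
      rintro ⟨w, hw, hwp⟩
      exact hw.2 hwp
    have := Finset.card_le_card (Finset.insert_subset hmem hsub)
    rw [Finset.card_insert_of_notMem hnmem] at this
    simpa [overallCard, add_comm] using this
  · apply Finset.card_le_card
    intro i hi
    simp only [Finset.mem_filter, Finset.mem_univ, true_and] at hi ⊢
    refine le_trans (Finset.card_le_card ?_) hi
    intro a ha
    simp only [Finset.mem_filter, Finset.mem_univ, true_and] at ha ⊢
    obtain ⟨w, hw, hwa⟩ := ha
    exact ⟨w, hw.1, hwa⟩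
end

section
/- There exists an integer n₀ such that for all integers n ≥ n₀ and 1 ≤ k ≤ n the following holds. Let U be a finite nonempty reverse-free set of words of length k over [n] whose overall matrix A_U has at least 5·n·√k 1-entries and has no light 1-entry. Let m = |A_U|/(n·√k), where |A_U| denotes the number of 1-entries of A_U. Then there exists a subset U' ⊆ U with |U'| ≥ |U|/n, with |A_{U'}| ≤ |A_U| − 2·n·m³/(5·√k), and with z_{U'} ≥ z_U + 1. -/
/-!
Fix a row `r` of `A_U` and, for each letter `c` in it, let `U_c` be the words with `c` at
position `r`. If `a ≠ b` both occur in rows `r` and `i`, reverse-freeness forbids that `b` occurs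
at position `i` in `U_a` while `a` occurs there in `U_b`. So, summed over `c`, the rows `i` of the
matrices `A_{U_c}` miss at least half of the ordered pairs of distinct letters common to rows `r`
and `i`, and the `U_c` with the smallest matrix saves at least the average.

A Cauchy–Schwarz double count over pairs of letters bounds the total number of such pairs from
below by `(|A_U|²/k - |A_U|)² / n²`; as `|A_U| ≥ 25 k`, this beats `2 δ |A_U|` for the required
saving `δ`, so some row with at least two 1-entries saves `δ`. Restricting to that `U_c` leaves a
single 1-entry in row `r`, and no light entry means `|U_c| > |U| / n`.
-/

namespace Finset

variable {ι α : Type*}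

theorem sq_sum_card_le_card_mul_sum_card_inter [Fintype ι] [DecidableEq α] (s : Finset α)
    (T : ι → Finset α) (hT : ∀ i, T i ⊆ s) :
    (∑ i, #(T i)) ^ 2 ≤ #s * ∑ r, ∑ i, #(T r ∩ T i) := by
  have hcard : ∀ t ⊆ s, #t = ∑ p ∈ s, if p ∈ t then 1 else 0 := fun t ht => by
    rw [sum_boole, Nat.cast_id, filter_mem_eq_inter, inter_eq_right.mpr ht]
  have hsum : ∑ i, #(T i) = ∑ p ∈ s, #{i | p ∈ T i} := by
    simp_rw [fun i => hcard (T i) (hT i), card_filter]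
    exact sum_comm
  have hsum_sq : ∑ r, ∑ i, #(T r ∩ T i) = ∑ p ∈ s, #{i | p ∈ T i} ^ 2 := by
    simp_rw [fun r i => hcard (T r ∩ T i) (inter_subset_left.trans (hT r)), card_filter, sq,
      sum_mul_sum, mem_inter, ite_zero_mul_ite_zero, mul_one]
    exact (sum_congr rfl fun r _ => sum_comm).trans sum_comm
  rw [hsum, hsum_sq]
  exact sq_sum_le_card_mul_sum_sq

theorem card_offDiag_eq_zero_of_card_le_one {s : Finset α} (hs : #s ≤ 1) :
    #s.offDiag = 0 := by
  rw [offDiag_card]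
  interval_cases #s <;> rfl

theorem card_offDiag_le_two_mul_card_filter_not (T : Finset α) (R : α → α → Prop)
    [DecidableRel R] (hR : ∀ a b, a ≠ b → R a b → ¬ R b a) :
    #T.offDiag ≤ 2 * #{p ∈ T.offDiag | ¬ R p.1 p.2} := by
  have hswap : #{p ∈ T.offDiag | R p.1 p.2} ≤ #{p ∈ T.offDiag | ¬ R p.1 p.2} := by
    refine card_le_card_of_injOn Prod.swap (fun p hp => ?_) (Prod.swap_injective.injOn)
    simp only [coe_filter, Set.mem_ofPred_eq, mem_offDiag] at hp ⊢
    obtain ⟨⟨h1, h2, hne⟩, hp⟩ := hp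
    exact ⟨⟨h2, h1, hne.symm⟩, hR _ _ hne hp⟩
  have := card_filter_add_card_filter_not (s := T.offDiag) (fun p => R p.1 p.2)
  omega

theorem sum_card_add_card_filter_notMem_eq [DecidableEq α] (S V : Finset α) (W : α → Finset α)
    (hW : ∀ c ∈ S, W c ⊆ V) :
    ∑ c ∈ S, #(W c) + #{p ∈ S ×ˢ V | p.2 ∉ W p.1} = #S * #V := by
  rw [card_filter, sum_product, ← sum_add_distrib, ← smul_eq_mul, ← sum_const]
  refine sum_congr rfl fun c hc => ?_
  dsimp only
  rw [← card_filter, filter_notMem_eq_sdiff, add_comm, card_sdiff_add_card_eq_card (hW c hc)]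

theorem two_mul_sum_card_add_card_offDiag_inter_le [DecidableEq α] (S V : Finset α)
    (W : α → Finset α) (hW : ∀ c ∈ S, W c ⊆ V) (hanti : ∀ a b, a ≠ b → b ∈ W a → a ∉ W b) :
    2 * ∑ c ∈ S, #(W c) + #(S ∩ V).offDiag ≤ 2 * (#S * #V) := by
  have hpairs := card_offDiag_le_two_mul_card_filter_not (S ∩ V) (fun a b => b ∈ W a) hanti
  have hsub : #{p ∈ (S ∩ V).offDiag | p.2 ∉ W p.1} ≤ #{p ∈ S ×ˢ V | p.2 ∉ W p.1} :=
    card_le_card <| filter_subset_filter _ fun p hp => by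
      simp only [mem_offDiag, mem_inter] at hp
      exact mem_product.2 ⟨hp.1.1, hp.2.1.2⟩
  have := sum_card_add_card_filter_notMem_eq S V W hW
  omega

theorem sq_sum_card_div_sub_sum_card_le_sum_card_offDiag [Fintype ι] (S : ι → Finset α) :
    (∑ i, (#(S i) : ℝ)) ^ 2 / Fintype.card ι - ∑ i, (#(S i) : ℝ) ≤
      ∑ i, (#(S i).offDiag : ℝ) := by
  have hoffDiag : ∀ i, (#(S i).offDiag : ℝ) = (#(S i) : ℝ) ^ 2 - #(S i) := fun i => by
    rw [offDiag_card, Nat.cast_sub (Nat.le_mul_self _), Nat.cast_mul, sq]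
  simp_rw [hoffDiag, sum_sub_distrib]
  gcongr
  exact div_le_of_le_mul₀ (Nat.cast_nonneg _) (sum_nonneg fun i _ => sq_nonneg _)
    ((sq_sum_le_card_mul_sum_sq).trans_eq (by rw [card_univ, mul_comm]))

theorem sq_le_sq_card_mul_sum_card_offDiag_inter [Fintype ι] [Fintype α] [DecidableEq α]
    (S : ι → Finset α)
    (hS : 0 ≤ (∑ i, (#(S i) : ℝ)) ^ 2 / Fintype.card ι - ∑ i, (#(S i) : ℝ)) :
    ((∑ i, (#(S i) : ℝ)) ^ 2 / Fintype.card ι - ∑ i, (#(S i) : ℝ)) ^ 2 ≤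
      (Fintype.card α : ℝ) ^ 2 * ∑ r, ∑ i, (#(S r ∩ S i).offDiag : ℝ) := by
  have hpairs := sq_sum_card_le_card_mul_sum_card_inter univ.offDiag (fun i => (S i).offDiag)
    fun i => offDiag_mono (subset_univ _)
  have hcard : #(univ : Finset α).offDiag ≤ Fintype.card α ^ 2 := by
    rw [offDiag_card, card_univ, sq]; exact Nat.sub_le _ _
  simp_rw [← offDiag_inter] at hpairs
  calc _ ≤ (∑ i, (#(S i).offDiag : ℝ)) ^ 2 :=
        pow_le_pow_left₀ hS (sq_sum_card_div_sub_sum_card_le_sum_card_offDiag S) 2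
    _ ≤ _ := by exact_mod_cast hpairs.trans (Nat.mul_le_mul_right _ hcard)

end Finset

open Finset

section Rows

variable {ι α : Type*} [DecidableEq α]

/-- The 1-entries of row `i` of the overall matrix `A_U`. -/
def row (U : Finset (ι → α)) (i : ι) : Finset α := U.image (· i)

@[simp]
theorem mem_row {U : Finset (ι → α)} {i : ι} {a : α} : a ∈ row U i ↔ ∃ w ∈ U, w i = a :=
  mem_image

theorem row_mono {U V : Finset (ι → α)} (h : U ⊆ V) (i : ι) : row U i ⊆ row V i :=
  image_subset_image h

theorem row_filter_apply_eq_subset_singleton (U : Finset (ι → α)) (r : ι) (c : α) :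
    row {w ∈ U | w r = c} r ⊆ {c} := fun a ha => by
  obtain ⟨w, hw, rfl⟩ := mem_row.1 ha
  exact mem_singleton.2 (mem_filter.1 hw).2

end Rows

variable {k n : ℕ}

theorem overallCard_eq_sum_card_row (U : Finset (Fin k → Fin n)) :
    overallCard U = ∑ i, #(row U i) := by
  rw [overallCard, card_filter, Fintype.sum_prod_type]
  refine sum_congr rfl fun i _ => ?_
  rw [← card_filter]
  congr 1
  ext a
  simp

theorem overallCard_le (U : Finset (Fin k → Fin n)) : overallCard U ≤ k * n :=
  (card_filter_le _ _).trans_eq (by simp)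

theorem emptiness_eq_card_filter_row (U : Finset (Fin k → Fin n)) :
    emptiness U = #{i | #(row U i) ≤ 1} := by
  rw [emptiness]
  congr! 4 with i
  ext a
  simp

theorem emptiness_lt_emptiness_filter (U : Finset (Fin k → Fin n)) {r : Fin k} (c : Fin n)
    (hr : 2 ≤ #(row U r)) : emptiness U < emptiness {w ∈ U | w r = c} := by
  simp_rw [emptiness_eq_card_filter_row]
  refine card_lt_card ⟨monotone_filter_right _ fun i _ hi =>
    (card_le_card (row_mono (filter_subset _ _) i)).trans hi, fun hsub => ?_⟩
  have hr' : r ∈ ({i | #(row {w ∈ U | w r = c} i) ≤ 1} : Finset (Fin k)) :=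
    mem_filter.2 ⟨mem_univ _, (card_le_card (row_filter_apply_eq_subset_singleton U r c)).trans_eq
      (card_singleton c)⟩
  have := (mem_filter.1 (hsub hr')).2
  omega

theorem ReverseFree.notMem_row_filter {U : Finset (Fin k → Fin n)}
    (hU : ReverseFree (U : Set (Fin k → Fin n))) {r i : Fin k} {a b : Fin n} (hab : a ≠ b)
    (hb : b ∈ row {w ∈ U | w r = a} i) : a ∉ row {w ∈ U | w r = b} i := by
  simp only [mem_row, mem_filter] at hb ⊢
  rintro ⟨x, ⟨hxU, hxr⟩, hxi⟩
  obtain ⟨w, ⟨hwU, hwr⟩, hwi⟩ := hb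
  have hwx : w ≠ x := fun h => hab (hwr.symm.trans (h ▸ hxr))
  exact hU w hwU x hxU hwx ⟨r, i, by rwa [hwr, hwi], by rw [hwr, hxi], by rw [hwi, hxr]⟩

theorem two_mul_sum_overallCard_filter_add_le {U : Finset (Fin k → Fin n)}
    (hU : ReverseFree (U : Set (Fin k → Fin n))) (r : Fin k) :
    2 * ∑ c ∈ row U r, overallCard {w ∈ U | w r = c} + ∑ i, #(row U r ∩ row U i).offDiag ≤
      2 * (#(row U r) * overallCard U) := by
  simp_rw [overallCard_eq_sum_card_row]
  rw [sum_comm, mul_sum, mul_sum, mul_sum, ← sum_add_distrib]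
  exact sum_le_sum fun i _ => two_mul_sum_card_add_card_offDiag_inter_le _ _ _
    (fun c _ => row_mono (filter_subset _ _) i) fun a b hab hb => hU.notMem_row_filter hab hb

theorem exists_overallCard_filter_le {U : Finset (Fin k → Fin n)}
    (hU : ReverseFree (U : Set (Fin k → Fin n))) {δ : ℝ} (hδ : 0 ≤ δ)
    (h : 2 * δ * overallCard U < ∑ r, ∑ i, (#(row U r ∩ row U i).offDiag : ℝ)) :
    ∃ r c, c ∈ row U r ∧ 2 ≤ #(row U r) ∧
      (overallCard {w ∈ U | w r = c} : ℝ) ≤ overallCard U - δ := by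
  obtain ⟨r, -, hr⟩ := exists_lt_of_sum_lt (f := fun r => 2 * δ * #(row U r))
    (g := fun r => ∑ i, (#(row U r ∩ row U i).offDiag : ℝ))
    (by rwa [← mul_sum, ← Nat.cast_sum, ← overallCard_eq_sum_card_row])
  have hr2 : 2 ≤ #(row U r) := by
    by_contra! hr1
    simp_rw [card_offDiag_eq_zero_of_card_le_one
      ((card_le_card inter_subset_left).trans (Nat.le_of_lt_succ hr1))] at hr
    simp only [CharP.cast_eq_zero, sum_const_zero] at hr
    exact hr.not_ge (by positivity)
  obtain ⟨c, hc, hmin⟩ := exists_min_image (row U r) (fun c => overallCard {w ∈ U | w r = c})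
    (card_pos.1 (by omega))
  have hsum := card_nsmul_le_sum _ _ _ hmin
  have htotal := two_mul_sum_overallCard_filter_add_le hU r
  have hpos : 0 < #(row U r) := by omega
  rw [smul_eq_mul] at hsum
  rify at hsum htotal hpos
  refine ⟨r, c, hc, hr2, le_of_mul_le_mul_left ?_ hpos⟩
  nlinarith

theorem twenty_five_mul_le_of_five_mul_sqrt_le {n k A : ℝ} (hk : 0 < k) (hkn : k ≤ n)
    (hlow : 5 * n * √k ≤ A) (hup : A ≤ n * k) : 25 * k ≤ A := by
  have hK := Real.sqrt_pos.2 hk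
  have hKsq := Real.sq_sqrt hk.le
  have h5 : 5 ≤ √k := le_of_mul_le_mul_left (a := n * √k) (by nlinarith) (by nlinarith)
  nlinarith

theorem sq_mul_saving_lt {n k A : ℝ} (hn : 0 < n) (hk : 0 < k) (hA : 25 * k ≤ A) :
    n ^ 2 * (2 * (2 * n * (A / (n * √k)) ^ 3 / (5 * √k)) * A) < (A ^ 2 / k - A) ^ 2 := by
  have hK := Real.sqrt_pos.2 hk
  have hKsq := Real.sq_sqrt hk.le
  have hlhs :
      n ^ 2 * (2 * (2 * n * (A / (n * √k)) ^ 3 / (5 * √k)) * A) = 4 * A ^ 4 / (5 * k ^ 2) := by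
    have hK4 : √k ^ 4 = k ^ 2 := by rw [show 4 = 2 * 2 from rfl, pow_mul, hKsq]
    field_simp
    rw [hK4]
    ring
  have hrhs : (A ^ 2 / k - A) ^ 2 = A ^ 2 * (A - k) ^ 2 / k ^ 2 := by
    field_simp
  rw [hlhs, hrhs, div_lt_div_iff₀ (by positivity) (by positivity)]
  have hApos : 0 < A := by linarith
  have hkey : 4 * A ^ 2 < 5 * (A - k) ^ 2 := by nlinarith
  nlinarith [mul_lt_mul_of_pos_left hkey (by positivity : 0 < A ^ 2 * k ^ 2)]

theorem stmt9 : ∃ n₀ : ℕ, ∀ n k : ℕ, n₀ ≤ n → 1 ≤ k → k ≤ n →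
    ∀ U : Finset (Fin k → Fin n), U.Nonempty → ReverseFree (U : Set (Fin k → Fin n)) →
    5 * (n : ℝ) * Real.sqrt k ≤ (overallCard U : ℝ) →
    (∀ r : Fin k, ∀ c : Fin n, (∃ w ∈ U, w r = c) →
      (U.card : ℝ) / (n : ℝ) < ((U.filter (fun w => w r = c)).card : ℝ)) →
    ∃ U' ⊆ U,
      (U.card : ℝ) / (n : ℝ) ≤ (U'.card : ℝ) ∧
      (overallCard U' : ℝ) ≤ (overallCard U : ℝ) -
        2 * n * ((overallCard U : ℝ) / ((n : ℝ) * Real.sqrt k)) ^ 3 / (5 * Real.sqrt k) ∧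
      emptiness U + 1 ≤ emptiness U' := by
  refine ⟨0, fun n k _ hk hkn U _ hU hlow hlight => ?_⟩
  have hkR : (0 : ℝ) < k := by exact_mod_cast hk
  have hknR : (k : ℝ) ≤ n := by exact_mod_cast hkn
  have hup : (overallCard U : ℝ) ≤ n * k := by
    exact_mod_cast (overallCard_le U).trans_eq (mul_comm _ _)
  have h25 := twenty_five_mul_le_of_five_mul_sqrt_le hkR hknR hlow hup
  have hA : ∑ i, (#(row U i) : ℝ) = overallCard U := by
    rw [overallCard_eq_sum_card_row, Nat.cast_sum]
  have hpairs := sq_le_sq_card_mul_sum_card_offDiag_inter (row U) (by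
    rw [hA, Fintype.card_fin, sub_nonneg, le_div_iff₀ hkR]; nlinarith)
  rw [hA, Fintype.card_fin, Fintype.card_fin] at hpairs
  obtain ⟨r, c, hc, hr, hsaving⟩ := exists_overallCard_filter_le hU (by positivity)
    (lt_of_mul_lt_mul_left ((sq_mul_saving_lt (by linarith) hkR h25).trans_le hpairs)
      (sq_nonneg (n : ℝ)))
  exact ⟨_, filter_subset _ _, (hlight r c (mem_row.1 hc)).le, hsaving,
    emptiness_lt_emptiness_filter U c hr⟩
end

section
/- Let A be an n × n 0-1 matrix that contains no occurrence of S (i.e., there are no two distinct rows and two distinct columns such that all four intersection entries of A equal 1). Then the set of all permutations π of [n] satisfying A(i, π(i)) = 1 for every i is reverse-free. -/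
theorem stmt11 {n : ℕ} (A : Fin n → Fin n → Bool)
    (hA : ∀ r1 r2 : Fin n, ∀ c1 c2 : Fin n, r1 ≠ r2 → c1 ≠ c2 →
      ¬(A r1 c1 = true ∧ A r1 c2 = true ∧ A r2 c1 = true ∧ A r2 c2 = true)) :
    ReverseFree {w : Fin n → Fin n | Function.Bijective w ∧ ∀ i, A i (w i) = true} := by
  rintro w ⟨hwb, hw⟩ x ⟨hxb, hx⟩ hne ⟨i, j, hij, h1, h2⟩
  have hijne : i ≠ j := fun h => hij (by rw [h])
  exact hA i j (w i) (w j) hijne hij ⟨hw i, by rw [h2]; exact hx i, by rw [h1]; exact hx j, hw j⟩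
end

section
/- Let n ≥ k ≥ 1 and let Π be a reverse-free set of permutations of [k]. Define the compression of a repetition-free word u of length k over [n] to be the word of length k over [k] whose i-th letter is u i mod k. Then the set of all repetition-free words of length k over [n] whose compression belongs to Π is reverse-free. -/
theorem stmt12 {n k : ℕ} (hk : 1 ≤ k) (hkn : k ≤ n)
    (P : Set (Fin k → Fin k)) (hinj : ∀ π ∈ P, Function.Injective π)
    (hrf : ReverseFree P) :
    ReverseFree {u : Fin k → Fin n | Function.Injective u ∧
      (fun i : Fin k => (⟨(u i : ℕ) % k, Nat.mod_lt _ hk⟩ : Fin k)) ∈ P} := by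
  rintro u ⟨hu, hcu⟩ x ⟨hx, hcx⟩ hne ⟨i, j, h1, h2, h3⟩
  set cu := (fun i : Fin k => (⟨(u i : ℕ) % k, Nat.mod_lt _ hk⟩ : Fin k)) with hcudef
  set cx := (fun i : Fin k => (⟨(x i : ℕ) % k, Nat.mod_lt _ hk⟩ : Fin k)) with hcxdef
  have hij : i ≠ j := fun h => h1 (by rw [h])
  have e2 : cu i = cx j := by simp [hcudef, hcxdef, h2]
  have e3 : cu j = cx i := by simp [hcudef, hcxdef, h3]
  have hcuinj := hinj cu hcu
  have hne' : cu ≠ cx := by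
    intro h
    exact hij (hcuinj (e2.trans (h ▸ rfl)))
  exact hrf cu hcu cx hcx hne' ⟨i, j, fun h => hij (hcuinj h), e2, e3⟩
end

section
/- Let A be a k × n 0-1 matrix with exactly w 1-entries in total, in which every row contains at least one 1-entry and at least t rows (0 ≤ t < k) contain exactly one 1-entry. Then the number of words u of length k over [n] with A(i, u i) = 1 for every position i is at most (w/(k − t))^(k − t) (real exponentiation). -/
lemma amgm_aux {ι : Type*} (s : Finset ι) (f : ι → ℝ) (hf : ∀ i ∈ s, 0 ≤ f i)
    (hs : 0 < s.card) :
    ∏ i ∈ s, f i ≤ ((∑ i ∈ s, f i) / s.card) ^ s.card := by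
  set m := s.card with hm
  have hm0 : (0:ℝ) < m := by exact_mod_cast hs
  have h := Real.geom_mean_le_arith_mean_weighted s (fun _ => (m:ℝ)⁻¹) f
    (fun i _ => by positivity)
    (by rw [Finset.sum_const, ← hm, nsmul_eq_mul, mul_inv_cancel₀ hm0.ne']) hf
  have hL : ∏ i ∈ s, f i ^ ((m:ℝ)⁻¹) = (∏ i ∈ s, f i) ^ ((m:ℝ)⁻¹) :=
    Real.finset_prod_rpow s f hf _
  have hR : ∑ i ∈ s, (m:ℝ)⁻¹ * f i = (∑ i ∈ s, f i) / m := by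
    rw [← Finset.mul_sum]; ring
  rw [hL, hR] at h
  have hp : 0 ≤ ∏ i ∈ s, f i := Finset.prod_nonneg hf
  have := Real.rpow_le_rpow (Real.rpow_nonneg hp _) h (le_of_lt hm0)
  rwa [← Real.rpow_mul hp, inv_mul_cancel₀ hm0.ne', Real.rpow_one, Real.rpow_natCast] at this

theorem stmt15 (k n w t : ℕ) (A : Fin k → Fin n → Bool)
    (hw : entriesCount A = w)
    (hrows : ∀ i : Fin k, 1 ≤ (Finset.univ.filter (fun a : Fin n => A i a = true)).card)
    (ht : t ≤ (Finset.univ.filter (fun i : Fin k =>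
      (Finset.univ.filter (fun a : Fin n => A i a = true)).card = 1)).card)
    (htk : t < k) :
    ((Finset.univ.filter (fun u : Fin k → Fin n => ∀ i, A i (u i) = true)).card : ℝ) ≤
      ((w : ℝ) / ((k : ℝ) - (t : ℝ))) ^ (k - t) := by
  classical
  set d : Fin k → ℕ := fun i => (Finset.univ.filter (fun a : Fin n => A i a = true)).card with hd
  have hcard : (Finset.univ.filter (fun u : Fin k → Fin n => ∀ i, A i (u i) = true)) =
      Fintype.piFinset (fun i => Finset.univ.filter (fun a => A i a = true)) := by
    ext u; simp [Fintype.mem_piFinset]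
  have hprod : (Finset.univ.filter (fun u : Fin k → Fin n => ∀ i, A i (u i) = true)).card
      = ∏ i, d i := by rw [hcard, Fintype.card_piFinset]
  have hsum : ∑ i, d i = w := by
    rw [← hw, entriesCount, Finset.card_filter, Fintype.sum_prod_type]
    exact Finset.sum_congr rfl fun i _ => Finset.card_filter _ _
  obtain ⟨T, hTsub, hTcard⟩ := Finset.exists_subset_card_eq ht
  have hT1 : ∀ i ∈ T, d i = 1 := fun i hi => (Finset.mem_filter.mp (hTsub hi)).2
  have hsplit : ∏ i, d i = ∏ i ∈ Finset.univ \ T, d i := by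
    rw [← Finset.prod_sdiff (Finset.subset_univ T), Finset.prod_congr rfl hT1]
    simp
  have hsumT : ∑ i ∈ T, d i = t := by
    rw [Finset.sum_congr rfl hT1]; simp [hTcard]
  have hsumsplit : ∑ i ∈ Finset.univ \ T, d i + t = w := by
    rw [← hsumT, Finset.sum_sdiff (Finset.subset_univ T), hsum]
  have hcardT : (Finset.univ \ T).card = k - t := by
    rw [Finset.card_sdiff_of_subset (Finset.subset_univ T), hTcard, Finset.card_univ, Fintype.card_fin]
  have hktpos : 0 < k - t := Nat.sub_pos_of_lt htk
  have hamgm := amgm_aux (Finset.univ \ T) (fun i => (d i : ℝ))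
    (fun i _ => by positivity) (hcardT ▸ hktpos)
  rw [hcardT] at hamgm
  have hsumR : ∑ i ∈ Finset.univ \ T, (d i : ℝ) = (w : ℝ) - t := by
    have : ((∑ i ∈ Finset.univ \ T, d i : ℕ) : ℝ) + t = w := by exact_mod_cast congrArg (Nat.cast : ℕ → ℝ) hsumsplit
    push_cast at this ⊢
    linarith
  rw [hsumR] at hamgm
  have hkt : ((k - t : ℕ) : ℝ) = (k : ℝ) - t := by
    rw [Nat.cast_sub htk.le]
  rw [hkt] at hamgm
  have hktR : (0:ℝ) < (k : ℝ) - t := by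
    have : (t:ℝ) < k := by exact_mod_cast htk
    linarith
  have htw : (t : ℝ) ≤ w := by
    have : t ≤ w := by rw [← hsumsplit]; exact Nat.le_add_left t _
    exact_mod_cast this
  calc ((Finset.univ.filter (fun u : Fin k → Fin n => ∀ i, A i (u i) = true)).card : ℝ)
      = ∏ i ∈ Finset.univ \ T, (d i : ℝ) := by rw [hprod, hsplit, Nat.cast_prod]
    _ ≤ (((w : ℝ) - t) / ((k : ℝ) - t)) ^ (k - t) := hamgm
    _ ≤ ((w : ℝ) / ((k : ℝ) - t)) ^ (k - t) := by
        apply pow_le_pow_left₀ (div_nonneg (by linarith) hktR.le)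
        gcongr
        linarith
end
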